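/- arXiv:2310.07732 — 8 statements merged into one kernel-verified Lean document; each statement's English description precedes it below -/
import Mathlib

section
/- Let v_1, …, v_m ∈ ℝ^n be data points and let w ∈ ℝ^m be a weight vector. Then every point x ∈ ℝ^n that minimizes the weighted Fermat–Weber objective F(x) = Σ_{i=1}^m w_i·d_Δ(x, v_i) over ℝ^n lies in the min-tropical convex hull of v_1, …, v_m; that is, there exists λ ∈ ℝ^m such that x_j = min_{1≤i≤m} (λ_i + v_{i,j}) for every coordinate j ∈ {1,…,n}. -/
/-- The asymmetric tropical distance `d_Δ(x,y) = n·max_i(x_i − y_i) + Σ_i (y_i − x_i)`. -/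
noncomputable def dTrop {n : ℕ} (x y : Fin n → ℝ) : ℝ :=
  (n : ℝ) * sSup (Set.range fun i => x i - y i) + ∑ i, (y i - x i)

theorem fermatWeber_mem_tropicalConvexHull
    (m n : ℕ) (hm : 0 < m) (hn : 0 < n)
    (v : Fin m → Fin n → ℝ) (w : Fin m → ℝ)
    (hw : ∀ i, 0 < w i) (hw1 : ∑ i, w i = 1)
    (x : Fin n → ℝ)
    (hmin : ∀ y : Fin n → ℝ,
      ∑ i, w i * dTrop x (v i) ≤ ∑ i, w i * dTrop y (v i)) :
    ∃ lam : Fin m → ℝ, ∀ j : Fin n,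
      x j = sInf (Set.range fun i : Fin m => lam i + v i j) := by
  haveI : Nonempty (Fin n) := ⟨⟨0, hn⟩⟩
  haveI : Nonempty (Fin m) := ⟨⟨0, hm⟩⟩
  set lam : Fin m → ℝ := fun i => sSup (Set.range fun j => x j - v i j) with hlam
  set y : Fin n → ℝ := fun j => sInf (Set.range fun i => lam i + v i j) with hy
  have hbddA : ∀ i, BddAbove (Set.range fun j => x j - v i j) :=
    fun i => (Set.finite_range _).bddAbove
  have hbddB : ∀ j, BddBelow (Set.range fun i => lam i + v i j) :=
    fun j => (Set.finite_range _).bddBelow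
  have hxle : ∀ j, x j ≤ y j := by
    intro j
    apply le_csInf (Set.range_nonempty _)
    rintro _ ⟨i, rfl⟩; dsimp only
    have : x j - v i j ≤ lam i := le_csSup (hbddA i) ⟨j, rfl⟩
    linarith
  have hyle : ∀ i j, y j ≤ lam i + v i j := fun i j => csInf_le (hbddB j) ⟨i, rfl⟩
  have hsup_y : ∀ i, sSup (Set.range fun j => y j - v i j) = lam i := by
    intro i
    obtain ⟨j0, hj0⟩ := Finite.exists_max (fun j => x j - v i j)
    have hlam_eq : lam i = x j0 - v i j0 := by
      apply le_antisymm
      · exact csSup_le (Set.range_nonempty _) (by rintro _ ⟨j, rfl⟩; exact hj0 j)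
      · exact le_csSup (hbddA i) ⟨j0, rfl⟩
    apply le_antisymm
    · exact csSup_le (Set.range_nonempty _) (by rintro _ ⟨j, rfl⟩; dsimp only; have := hyle i j; linarith)
    · calc lam i = x j0 - v i j0 := hlam_eq
        _ ≤ y j0 - v i j0 := by have := hxle j0; linarith
        _ ≤ sSup (Set.range fun j => y j - v i j) :=
            le_csSup ((Set.finite_range _).bddAbove) ⟨j0, rfl⟩
  set S : ℝ := ∑ j, (y j - x j) with hS
  have hdiff : ∀ i, dTrop y (v i) = dTrop x (v i) - S := by
    intro i
    have hsum : ∑ j, (v i j - y j) = ∑ j, (v i j - x j) - S := by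
      rw [hS, ← Finset.sum_sub_distrib]
      exact Finset.sum_congr rfl (fun j _ => by ring)
    simp only [dTrop, hsup_y i, hlam, hsum]
    ring
  have hFy : ∑ i, w i * dTrop y (v i) = ∑ i, w i * dTrop x (v i) - S := by
    calc ∑ i, w i * dTrop y (v i) = ∑ i, (w i * dTrop x (v i) - w i * S) := by
          exact Finset.sum_congr rfl (fun i _ => by rw [hdiff i]; ring)
      _ = ∑ i, w i * dTrop x (v i) - (∑ i, w i) * S := by
          rw [Finset.sum_sub_distrib, Finset.sum_mul]
      _ = ∑ i, w i * dTrop x (v i) - S := by rw [hw1, one_mul]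
  have hS_le : S ≤ 0 := by have := hmin y; rw [hFy] at this; linarith
  have hS_nonneg : 0 ≤ S := Finset.sum_nonneg (fun j _ => by have := hxle j; linarith)
  have hall : ∀ j, y j - x j = 0 := by
    intro j
    have := (Finset.sum_eq_zero_iff_of_nonneg
      (fun j _ => by have := hxle j; linarith : ∀ j ∈ Finset.univ, 0 ≤ y j - x j)).mp
      (le_antisymm hS_le hS_nonneg)
    exact this j (Finset.mem_univ j)
  exact ⟨lam, fun j => by have := hall j; linarith⟩
end

section
/- Let v_1, …, v_m ∈ ℝ^n be data points and let w ∈ ℝ^m be a weight vector. Then the set of minimizers of F(x) = Σ_{i=1}^m w_i·d_Δ(x, v_i) over ℝ^n is a covector cell: there exists a minimizer x₀ such that the set of all minimizers of F equals {x ∈ ℝ^n : for every pair (i,j), if x₀_j − v_{i,j} = max_{1≤k≤n}(x₀_k − v_{i,k}) then x_j − v_{i,j} = max_{1≤k≤n}(x_k − v_{i,k})}. -/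
open Finset Filter Topology

namespace FWaux

variable {m n : ℕ}

noncomputable def smax [Nonempty (Fin n)] (f : Fin n → ℝ) : ℝ :=
  Finset.univ.sup' Finset.univ_nonempty f

lemma sSup_range_eq [Nonempty (Fin n)] (f : Fin n → ℝ) :
    sSup (Set.range f) = smax f := by
  rw [smax, Finset.sup'_eq_csSup_image]
  congr 1
  simp

lemma le_smax [Nonempty (Fin n)] (f : Fin n → ℝ) (j : Fin n) : f j ≤ smax f :=
  Finset.le_sup' f (mem_univ j)

lemma smax_le [Nonempty (Fin n)] {f : Fin n → ℝ} {a : ℝ} (h : ∀ j, f j ≤ a) :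
    smax f ≤ a :=
  Finset.sup'_le _ _ fun j _ => h j

lemma exists_smax [Nonempty (Fin n)] (f : Fin n → ℝ) : ∃ j, smax f = f j := by
  obtain ⟨j, _, h⟩ := Finset.exists_mem_eq_sup' (Finset.univ_nonempty) f
  exact ⟨j, h⟩

lemma dTrop_eq [Nonempty (Fin n)] (x y : Fin n → ℝ) :
    dTrop x y = (n : ℝ) * smax (fun j => x j - y j) + (∑ j, y j - ∑ j, x j) := by
  rw [dTrop, sSup_range_eq, Finset.sum_sub_distrib]

lemma dTrop_eq_sum [Nonempty (Fin n)] (x y : Fin n → ℝ) :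
    dTrop x y = ∑ j, (smax (fun k => x k - y k) - (x j - y j)) := by
  rw [dTrop_eq, Finset.sum_sub_distrib, Finset.sum_const, Finset.card_univ,
    Fintype.card_fin, nsmul_eq_mul, Finset.sum_sub_distrib]
  ring

lemma dTrop_term_nonneg [Nonempty (Fin n)] (x y : Fin n → ℝ) (j : Fin n) :
    0 ≤ smax (fun k => x k - y k) - (x j - y j) := by
  have := le_smax (fun k => x k - y k) j
  linarith

lemma dTrop_nonneg [Nonempty (Fin n)] (x y : Fin n → ℝ) : 0 ≤ dTrop x y := by
  rw [dTrop_eq_sum]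
  exact Finset.sum_nonneg fun j _ => dTrop_term_nonneg x y j

lemma dTrop_ge [Nonempty (Fin n)] (x y : Fin n → ℝ) (j : Fin n) :
    smax (fun k => x k - y k) - (x j - y j) ≤ dTrop x y := by
  rw [dTrop_eq_sum]
  exact Finset.single_le_sum (fun k _ => dTrop_term_nonneg x y k) (mem_univ j)

lemma dTrop_shift [Nonempty (Fin n)] (x y : Fin n → ℝ) (c : ℝ) :
    dTrop (fun j => x j + c) y = dTrop x y := by
  have hs : smax (fun j => (x j + c) - y j) = smax (fun j => x j - y j) + c := by
    apply le_antisymm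
    · exact smax_le fun j => by have := le_smax (fun k => x k - y k) j; linarith
    · obtain ⟨j, hj⟩ := exists_smax (fun k => x k - y k)
      have := le_smax (fun k => (x k + c) - y k) j
      linarith
  rw [dTrop_eq, dTrop_eq, hs]
  have : ∑ j, (x j + c) = ∑ j, x j + (n : ℝ) * c := by
    rw [Finset.sum_add_distrib, Finset.sum_const, Finset.card_univ, Fintype.card_fin,
      nsmul_eq_mul]
  rw [this]
  ring


noncomputable def sI [Nonempty (Fin n)] (v : Fin m → Fin n → ℝ) (i : Fin m)
    (x : Fin n → ℝ) : ℝ := smax (fun j => x j - v i j)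

noncomputable def FW (v : Fin m → Fin n → ℝ) (w : Fin m → ℝ) (x : Fin n → ℝ) : ℝ :=
  ∑ i, w i * dTrop x (v i)

lemma FW_decomp [Nonempty (Fin n)] (v : Fin m → Fin n → ℝ) (w : Fin m → ℝ)
    (hw1 : ∑ i, w i = 1) (x : Fin n → ℝ) :
    FW v w x = (n : ℝ) * (∑ i, w i * sI v i x) + (∑ i, w i * ∑ j, v i j) - ∑ j, x j := by
  have h : ∀ i : Fin m, w i * dTrop x (v i) =
      (n : ℝ) * (w i * sI v i x) + w i * (∑ j, v i j) - w i * (∑ j, x j) := by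
    intro i
    rw [dTrop_eq, sI]
    ring
  rw [FW, Finset.sum_congr rfl fun i _ => h i, Finset.sum_sub_distrib,
    Finset.sum_add_distrib, ← Finset.mul_sum, ← Finset.sum_mul, hw1, one_mul]

lemma FW_continuous [Nonempty (Fin n)] (v : Fin m → Fin n → ℝ) (w : Fin m → ℝ) :
    Continuous (FW v w) := by
  apply continuous_finset_sum
  intro i _
  apply Continuous.mul continuous_const
  have h1 : Continuous (fun x : Fin n → ℝ => smax (fun j => x j - v i j)) := by
    apply Continuous.finset_sup'_apply (f := fun (j : Fin n) (x : Fin n → ℝ) => x j - v i j)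
      Finset.univ_nonempty
    intro j _
    exact (continuous_apply j).sub continuous_const
  have h2 : Continuous (fun x : Fin n → ℝ => ∑ j, (v i j - x j)) := by
    apply continuous_finset_sum
    intro j _
    exact continuous_const.sub (continuous_apply j)
  have : (fun x : Fin n → ℝ => dTrop x (v i)) =
      fun x => (n : ℝ) * smax (fun j => x j - v i j) + ∑ j, (v i j - x j) := by
    funext x
    rw [dTrop_eq, Finset.sum_sub_distrib]
  rw [this]
  exact (continuous_const.mul h1).add h2

lemma FW_exists_min [Nonempty (Fin m)] [Nonempty (Fin n)]
    (v : Fin m → Fin n → ℝ) (w : Fin m → ℝ) (hw : ∀ i, 0 < w i) :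
    ∃ x₁ : Fin n → ℝ, ∀ y, FW v w x₁ ≤ FW v w y := by
  obtain ⟨i0⟩ := (inferInstance : Nonempty (Fin m))
  obtain ⟨j0⟩ := (inferInstance : Nonempty (Fin n))
  set B : ℝ := smax (fun j => |v i0 j|) with hBdef
  have hB : 0 ≤ B := by
    rw [hBdef]
    exact le_trans (abs_nonneg (v i0 j0)) (le_smax (fun j => |v i0 j|) j0)
  -- componentwise bound
  have hcomp : ∀ x : Fin n → ℝ, x j0 = 0 → ∀ j, |x j| ≤ dTrop x (v i0) + 2 * B := by
    intro x hx0 j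
    have hMj : x j - v i0 j ≤ smax (fun k => x k - v i0 k) :=
      le_smax (fun k => x k - v i0 k) j
    have hMj0 : x j0 - v i0 j0 ≤ smax (fun k => x k - v i0 k) :=
      le_smax (fun k => x k - v i0 k) j0
    have hgj : smax (fun k => x k - v i0 k) - (x j - v i0 j) ≤ dTrop x (v i0) := dTrop_ge x _ j
    have hgj0 : smax (fun k => x k - v i0 k) - (x j0 - v i0 j0) ≤ dTrop x (v i0) := dTrop_ge x _ j0
    have habsj : |v i0 j| ≤ B := le_smax (fun k => |v i0 k|) j
    have habsj0 : |v i0 j0| ≤ B := le_smax (fun k => |v i0 k|) j0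
    rw [abs_le]
    constructor
    · have := abs_le.1 habsj
      have := abs_le.1 habsj0
      rw [hx0] at hMj0
      linarith [abs_le.1 habsj |>.1, abs_le.1 habsj |>.2, abs_le.1 habsj0 |>.1,
        abs_le.1 habsj0 |>.2]
    · rw [hx0] at hgj0
      linarith [abs_le.1 habsj |>.1, abs_le.1 habsj |>.2, abs_le.1 habsj0 |>.1,
        abs_le.1 habsj0 |>.2]
  have hF0 : 0 ≤ FW v w (fun _ => 0) :=
    Finset.sum_nonneg fun i _ => mul_nonneg (hw i).le (dTrop_nonneg _ _)
  set F0 : ℝ := FW v w (fun _ => 0) with hF0def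
  set R : ℝ := 2 * B + (F0 + 1) / w i0 with hRdef
  have hR : 0 ≤ R := by
    rw [hRdef]
    have : 0 < (F0 + 1) / w i0 := div_pos (by linarith) (hw i0)
    linarith
  set K : Set (Fin n → ℝ) :=
    Set.pi Set.univ (fun j => if j = j0 then ({0} : Set ℝ) else Set.Icc (-R) R) with hKdef
  have hKc : IsCompact K := by
    apply isCompact_univ_pi
    intro j
    by_cases h : j = j0 <;> simp [h, isCompact_Icc]
  have h0K : (fun _ : Fin n => (0 : ℝ)) ∈ K := by
    intro j _
    by_cases h : j = j0 <;> simp [h, hR]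
  obtain ⟨x₁, hx₁K, hx₁min⟩ := hKc.exists_isMinOn ⟨_, h0K⟩ (FW_continuous v w).continuousOn
  refine ⟨x₁, fun y => ?_⟩
  set y' : Fin n → ℝ := fun j => y j + (- y j0) with hy'def
  have hy'0 : y' j0 = 0 := by simp [hy'def]
  have hFy' : FW v w y' = FW v w y := by
    rw [FW, FW]
    exact Finset.sum_congr rfl fun i _ => by rw [dTrop_shift]
  rw [← hFy']
  by_cases hyK : y' ∈ K
  · exact hx₁min hyK
  · -- outside: some coordinate exceeds R
    have : ∃ j, ¬ (y' j ∈ (if j = j0 then ({0} : Set ℝ) else Set.Icc (-R) R)) := by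
      by_contra h
      push_neg at h
      exact hyK fun j _ => h j
    obtain ⟨j, hj⟩ := this
    have hjne : j ≠ j0 := by
      intro h
      apply hj
      simp [h, hy'0]
    rw [if_neg hjne] at hj
    have habs : R < |y' j| := by
      rcases lt_or_ge R |y' j| with h | h
      · exact h
      · exact absurd (abs_le.1 h) (by simpa [Set.mem_Icc] using hj)
    have hd : dTrop y' (v i0) ≥ |y' j| - 2 * B := by
      have := hcomp y' hy'0 j
      linarith
    have hlow : w i0 * dTrop y' (v i0) ≤ FW v w y' := by
      apply Finset.single_le_sum (f := fun i => w i * dTrop y' (v i))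
        (fun i _ => mul_nonneg (hw i).le (dTrop_nonneg _ _)) (mem_univ i0)
    have hx₁le : FW v w x₁ ≤ F0 := hx₁min h0K
    have : F0 + 1 ≤ w i0 * dTrop y' (v i0) := by
      have h1 : w i0 * (R - 2*B) ≤ w i0 * dTrop y' (v i0) := by
        apply mul_le_mul_of_nonneg_left _ (hw i0).le
        linarith
      have h2 : w i0 * (R - 2*B) = F0 + 1 := by
        rw [hRdef]
        field_simp
        rw [add_sub_cancel_left, mul_div_assoc']
        exact mul_div_cancel_left₀ _ (hw i0).ne'
      linarith
    linarith


open Classical in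
noncomputable def covF [Nonempty (Fin n)] (v : Fin m → Fin n → ℝ) (x : Fin n → ℝ) :
    Finset (Fin m × Fin n) :=
  Finset.univ.filter (fun p => x p.2 - v p.1 p.2 = sI v p.1 x)

lemma mem_covF [Nonempty (Fin n)] {v : Fin m → Fin n → ℝ} {x : Fin n → ℝ}
    {p : Fin m × Fin n} : p ∈ covF v x ↔ x p.2 - v p.1 p.2 = sI v p.1 x := by
  simp [covF]

lemma exists_mem_covF [Nonempty (Fin n)] (v : Fin m → Fin n → ℝ) (x : Fin n → ℝ)
    (i : Fin m) : ∃ j, (i, j) ∈ covF v x := by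
  obtain ⟨j, hj⟩ := exists_smax (fun j => x j - v i j)
  exact ⟨j, mem_covF.2 hj.symm⟩

lemma midpoint_facts [Nonempty (Fin m)] [Nonempty (Fin n)] (hn : 0 < n)
    (v : Fin m → Fin n → ℝ) (w : Fin m → ℝ) (hw : ∀ i, 0 < w i) (hw1 : ∑ i, w i = 1)
    {x y : Fin n → ℝ} (hx : ∀ u, FW v w x ≤ FW v w u) (hy : ∀ u, FW v w y ≤ FW v w u) :
    (∀ u, FW v w (fun j => (x j + y j) / 2) ≤ FW v w u) ∧
    (∀ i, sI v i (fun j => (x j + y j) / 2) = (sI v i x + sI v i y) / 2) := by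
  set z : Fin n → ℝ := fun j => (x j + y j) / 2 with hz
  have hnR : (0:ℝ) < n := by exact_mod_cast hn
  have hsmid : ∀ i, sI v i z ≤ (sI v i x + sI v i y) / 2 := by
    intro i
    rw [sI]
    apply smax_le
    intro j
    have h1 := le_smax (fun k => x k - v i k) j
    have h2 := le_smax (fun k => y k - v i k) j
    show z j - v i j ≤ (sI v i x + sI v i y) / 2
    rw [sI, sI]
    show (x j + y j) / 2 - v i j ≤ _
    linarith
  have h2' : ∑ i, w i * ((sI v i x + sI v i y) / 2)
      = ((∑ i, w i * sI v i x) + ∑ i, w i * sI v i y) / 2 := by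
    rw [← Finset.sum_add_distrib, Finset.sum_div]
    exact Finset.sum_congr rfl fun i _ => by ring
  have hGz : ∑ i, w i * sI v i z ≤ ((∑ i, w i * sI v i x) + ∑ i, w i * sI v i y) / 2 := by
    have h1 : ∑ i, w i * sI v i z ≤ ∑ i, w i * ((sI v i x + sI v i y) / 2) :=
      Finset.sum_le_sum fun i _ => mul_le_mul_of_nonneg_left (hsmid i) (hw i).le
    linarith
  have hsumz : ∑ j, z j = ((∑ j, x j) + ∑ j, y j) / 2 := by
    rw [← Finset.sum_add_distrib, Finset.sum_div]
  have hxy : FW v w x = FW v w y := le_antisymm (hx y) (hy x)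
  have hdx := FW_decomp v w hw1 x
  have hdy := FW_decomp v w hw1 y
  have hdz := FW_decomp v w hw1 z
  have hmul := mul_le_mul_of_nonneg_left hGz hnR.le
  have hFz_le : FW v w z ≤ FW v w x := by
    rw [hdz, hsumz]
    linarith
  have hFz_eq : FW v w z = FW v w x := le_antisymm hFz_le (hx z)
  have hGz_eq : ∑ i, w i * sI v i z = ((∑ i, w i * sI v i x) + ∑ i, w i * sI v i y) / 2 := by
    rw [hsumz] at hdz
    have hne : (n:ℝ) * (∑ i, w i * sI v i z)
        = (n:ℝ) * (((∑ i, w i * sI v i x) + ∑ i, w i * sI v i y) / 2) := by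
      linarith
    exact mul_left_cancel₀ hnR.ne' hne
  have hzero : ∑ i, w i * ((sI v i x + sI v i y) / 2 - sI v i z) = 0 := by
    simp only [mul_sub]
    rw [Finset.sum_sub_distrib, h2', hGz_eq, sub_self]
  have heach : ∀ i, sI v i z = (sI v i x + sI v i y) / 2 := by
    intro i
    have h0 := (Finset.sum_eq_zero_iff_of_nonneg
      (fun i _ => mul_nonneg (hw i).le (by linarith [hsmid i]))).1 hzero i (mem_univ i)
    rcases mul_eq_zero.1 h0 with h | h
    · exact absurd h (hw i).ne'
    · linarith
  exact ⟨fun u => by rw [hFz_eq]; exact hx u, heach⟩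

lemma covF_mid_subset [Nonempty (Fin n)] (v : Fin m → Fin n → ℝ) {x y : Fin n → ℝ}
    (h : ∀ i, sI v i (fun j => (x j + y j) / 2) = (sI v i x + sI v i y) / 2) :
    covF v (fun j => (x j + y j) / 2) ⊆ covF v x ∧
    covF v (fun j => (x j + y j) / 2) ⊆ covF v y := by
  constructor <;>
  · intro p hp
    rw [mem_covF] at hp ⊢
    rw [h p.1] at hp
    have h1 : x p.2 - v p.1 p.2 ≤ sI v p.1 x := le_smax (fun k => x k - v p.1 k) p.2
    have h2 : y p.2 - v p.1 p.2 ≤ sI v p.1 y := le_smax (fun k => y k - v p.1 k) p.2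
    have hp' : (x p.2 + y p.2) / 2 - v p.1 p.2 = (sI v p.1 x + sI v p.1 y) / 2 := hp
    linarith

lemma cell_subset_min [Nonempty (Fin m)] [Nonempty (Fin n)]
    (v : Fin m → Fin n → ℝ) (w : Fin m → ℝ) (hw : ∀ i, 0 < w i) (hw1 : ∑ i, w i = 1)
    {x₀ x : Fin n → ℝ} (hx₀ : ∀ u, FW v w x₀ ≤ FW v w u)
    (hcx : covF v x₀ ⊆ covF v x) :
    ∀ u, FW v w x ≤ FW v w u := by
  have hmain : FW v w x ≤ FW v w x₀ := by
    choose jsel hjsel using exists_mem_covF v x₀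
    have hev : ∀ p : Fin m × Fin n × Fin n, ∀ᶠ t in 𝓝[>] (0:ℝ),
        ((p.1, p.2.1) ∈ covF v x₀ →
          ((1+t) * x₀ p.2.2 - t * x p.2.2) - v p.1 p.2.2
            ≤ ((1+t) * x₀ p.2.1 - t * x p.2.1) - v p.1 p.2.1) := by
      rintro ⟨i, j, k⟩
      by_cases hij : (i, j) ∈ covF v x₀
      · by_cases hik : (i, k) ∈ covF v x₀
        · apply Filter.Eventually.of_forall
          intro t _
          have e1 : x₀ j - v i j = sI v i x₀ := mem_covF.1 hij
          have e2 : x₀ k - v i k = sI v i x₀ := mem_covF.1 hik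
          have e3 : x j - v i j = sI v i x := mem_covF.1 (hcx hij)
          have e4 : x k - v i k = sI v i x := mem_covF.1 (hcx hik)
          have f1 : x₀ j - v i j = x₀ k - v i k := by rw [e1, e2]
          have f2 : x j - v i j = x k - v i k := by rw [e3, e4]
          have g1 : t * (x₀ j - v i j) = t * (x₀ k - v i k) := by rw [f1]
          have g2 : t * (x j - v i j) = t * (x k - v i k) := by rw [f2]
          nlinarith [g1, g2, f1]
        · have e1 : x₀ j - v i j = sI v i x₀ := mem_covF.1 hij
          have e3 : x j - v i j = sI v i x := mem_covF.1 (hcx hij)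
          have hk_le : x₀ k - v i k ≤ sI v i x₀ := le_smax (fun l => x₀ l - v i l) k
          have hk_ne : x₀ k - v i k ≠ sI v i x₀ := fun h => hik (mem_covF.2 h)
          have ha : x₀ k - v i k < x₀ j - v i j := by
            rw [e1]; exact lt_of_le_of_ne hk_le hk_ne
          have hb : x k - v i k ≤ x j - v i j := by
            rw [e3]; exact le_smax (fun l => x l - v i l) k
          have hgc : Continuous (fun t : ℝ =>
              (((1+t) * x₀ j - t * x j) - v i j) - (((1+t) * x₀ k - t * x k) - v i k)) := by
            fun_prop
          have hg0 : (0:ℝ) < (((1+(0:ℝ)) * x₀ j - 0 * x j) - v i j)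
              - (((1+(0:ℝ)) * x₀ k - 0 * x k) - v i k) := by
            ring_nf
            nlinarith [ha]
          have hopen : {t : ℝ | 0 < (((1+t) * x₀ j - t * x j) - v i j)
              - (((1+t) * x₀ k - t * x k) - v i k)} ∈ 𝓝 (0:ℝ) :=
            (isOpen_lt continuous_const hgc).mem_nhds hg0
          have hev1 : ∀ᶠ t in 𝓝 (0:ℝ), 0 < (((1+t) * x₀ j - t * x j) - v i j)
              - (((1+t) * x₀ k - t * x k) - v i k) := hopen
          exact ((hev1.filter_mono nhdsWithin_le_nhds).mono fun t ht _ => by linarith)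
      · exact Filter.Eventually.of_forall fun t hmem => absurd hmem hij
    have hallev : ∀ᶠ t in 𝓝[>] (0:ℝ), (0 < t ∧ ∀ p : Fin m × Fin n × Fin n,
        ((p.1, p.2.1) ∈ covF v x₀ →
          ((1+t) * x₀ p.2.2 - t * x p.2.2) - v p.1 p.2.2
            ≤ ((1+t) * x₀ p.2.1 - t * x p.2.1) - v p.1 p.2.1)) :=
      (eventually_mem_nhdsWithin.mono fun t ht => ht).and (eventually_all.2 hev)
    obtain ⟨t, ht0, htQ⟩ := hallev.exists
    set y : Fin n → ℝ := fun j => (1+t) * x₀ j - t * x j with hy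
    have hyi : ∀ i, sI v i y = y (jsel i) - v i (jsel i) := by
      intro i
      refine le_antisymm (smax_le fun k => ?_) (le_smax (fun k => y k - v i k) (jsel i))
      have := htQ (i, jsel i, k) (hjsel i)
      show y k - v i k ≤ y (jsel i) - v i (jsel i)
      exact this
    have hx₀i : ∀ i, sI v i x₀ = x₀ (jsel i) - v i (jsel i) :=
      fun i => (mem_covF.1 (hjsel i)).symm
    have hxi : ∀ i, sI v i x = x (jsel i) - v i (jsel i) :=
      fun i => (mem_covF.1 (hcx (hjsel i))).symm
    have hGy : ∑ i, w i * sI v i y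
        = (1+t) * (∑ i, w i * sI v i x₀) - t * (∑ i, w i * sI v i x) := by
      rw [Finset.mul_sum, Finset.mul_sum, ← Finset.sum_sub_distrib]
      refine Finset.sum_congr rfl fun i _ => ?_
      rw [hyi i, hx₀i i, hxi i]
      show w i * (((1+t) * x₀ (jsel i) - t * x (jsel i)) - v i (jsel i)) = _
      ring
    have hsumy : ∑ j, y j = (1+t) * (∑ j, x₀ j) - t * (∑ j, x j) := by
      rw [Finset.mul_sum, Finset.mul_sum, ← Finset.sum_sub_distrib]
    have hFy := FW_decomp v w hw1 y
    have hFx₀ := FW_decomp v w hw1 x₀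
    have hFx := FW_decomp v w hw1 x
    have hmin := hx₀ y
    have key : FW v w y = (1+t) * FW v w x₀ - t * FW v w x := by
      rw [hFy, hFx₀, hFx, hGy, hsumy]; ring
    nlinarith [hmin, key, ht0]
  exact fun u => le_trans hmain (hx₀ u)


end FWaux

open FWaux

theorem fermatWeber_set_is_covector_cell
    (m n : ℕ) (hm : 0 < m) (hn : 0 < n)
    (v : Fin m → Fin n → ℝ) (w : Fin m → ℝ)
    (hw : ∀ i, 0 < w i) (hw1 : ∑ i, w i = 1) :
    ∃ x₀ : Fin n → ℝ,
      (∀ y : Fin n → ℝ,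
        ∑ i, w i * dTrop x₀ (v i) ≤ ∑ i, w i * dTrop y (v i)) ∧
      {x : Fin n → ℝ | ∀ y : Fin n → ℝ,
          ∑ i, w i * dTrop x (v i) ≤ ∑ i, w i * dTrop y (v i)} =
      {x : Fin n → ℝ | ∀ i : Fin m, ∀ j : Fin n,
          x₀ j - v i j = sSup (Set.range fun k : Fin n => x₀ k - v i k) →
          x j - v i j = sSup (Set.range fun k : Fin n => x k - v i k)} := by
  haveI : Nonempty (Fin m) := ⟨⟨0, hm⟩⟩
  haveI : Nonempty (Fin n) := ⟨⟨0, hn⟩⟩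
  obtain ⟨x₁, hx₁⟩ := FW_exists_min v w hw
  set M : Set (Fin n → ℝ) := {x | ∀ u, FW v w x ≤ FW v w u} with hM
  have hMne : x₁ ∈ M := hx₁
  set S : Set ℕ := {k | ∃ x ∈ M, (covF v x).card = k} with hS
  have hSne : S.Nonempty := ⟨_, x₁, hMne, rfl⟩
  obtain ⟨x₀, hx₀M, hx₀card⟩ : ∃ x ∈ M, (covF v x).card = sInf S := Nat.sInf_mem hSne
  have hmincard : ∀ x ∈ M, (covF v x₀).card ≤ (covF v x).card := by
    intro x hx
    rw [hx₀card]
    exact Nat.sInf_le ⟨x, hx, rfl⟩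
  have hsub : ∀ x ∈ M, covF v x₀ ⊆ covF v x := by
    intro x hx
    obtain ⟨hmidM, heach⟩ := midpoint_facts hn v w hw hw1 hx₀M hx
    obtain ⟨h1, h2⟩ := covF_mid_subset v heach
    have heq : covF v (fun j => (x₀ j + x j) / 2) = covF v x₀ :=
      Finset.eq_of_subset_of_card_le h1 (hmincard _ hmidM)
    rw [← heq]
    exact h2
  refine ⟨x₀, hx₀M, ?_⟩
  ext x
  simp only [Set.mem_setOf_eq]
  constructor
  · intro hx i j hj
    have hmem : (i, j) ∈ covF v x₀ := by
      rw [mem_covF]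
      rw [sSup_range_eq] at hj
      exact hj
    have h := hsub x hx hmem
    rw [mem_covF] at h
    rw [sSup_range_eq]
    exact h
  · intro hx
    refine cell_subset_min v w hw hw1 hx₀M ?_
    intro p hp
    rw [mem_covF] at hp ⊢
    have := hx p.1 p.2 (by rw [sSup_range_eq]; exact hp)
    rw [sSup_range_eq] at this
    exact this
end

section
/- Let v_1, …, v_m ∈ ℝ^n be data points and let x₀ be any point of the min-tropical convex hull tconv(v_1,…,v_m). Then there exists a weight vector w ∈ ℝ^m (with w_i > 0 and Σ w_i = 1) such that the set of minimizers over ℝ^n of F(x) = Σ_{i=1}^m w_i·d_Δ(x, v_i) equals the covector cell C(x₀) = {x ∈ ℝ^n : for every pair (i,j), if x₀_j − v_{i,j} = max_{1≤k≤n}(x₀_k − v_{i,k}) then x_j − v_{i,j} = max_{1≤k≤n}(x_k − v_{i,k})}. -/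
lemma le_sSup_range_aux {n : ℕ} (f : Fin n → ℝ) (i : Fin n) : f i ≤ sSup (Set.range f) :=
  le_csSup (Set.finite_range f).bddAbove ⟨i, rfl⟩

lemma exists_eq_sSup_range_aux {n : ℕ} [Nonempty (Fin n)] (f : Fin n → ℝ) :
    ∃ i, f i = sSup (Set.range f) :=
  Set.mem_range.mp ((Set.range_nonempty f).csSup_mem (Set.finite_range f))

lemma sInf_range_le_aux {n : ℕ} (f : Fin n → ℝ) (i : Fin n) : sInf (Set.range f) ≤ f i :=
  csInf_le (Set.finite_range f).bddBelow ⟨i, rfl⟩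

lemma exists_eq_sInf_range_aux {n : ℕ} [Nonempty (Fin n)] (f : Fin n → ℝ) :
    ∃ i, f i = sInf (Set.range f) :=
  Set.mem_range.mp ((Set.range_nonempty f).csInf_mem (Set.finite_range f))

theorem covector_cell_is_fermatWeber_set
    (m n : ℕ) (hm : 0 < m) (hn : 0 < n)
    (v : Fin m → Fin n → ℝ) (x₀ : Fin n → ℝ)
    (hx₀ : ∃ lam : Fin m → ℝ, ∀ j : Fin n,
      x₀ j = sInf (Set.range fun i : Fin m => lam i + v i j)) :
    ∃ w : Fin m → ℝ, (∀ i, 0 < w i) ∧ ∑ i, w i = 1 ∧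
      {x : Fin n → ℝ | ∀ y : Fin n → ℝ,
          ∑ i, w i * dTrop x (v i) ≤ ∑ i, w i * dTrop y (v i)} =
      {x : Fin n → ℝ | ∀ i : Fin m, ∀ j : Fin n,
          x₀ j - v i j = sSup (Set.range fun k : Fin n => x₀ k - v i k) →
          x j - v i j = sSup (Set.range fun k : Fin n => x k - v i k)} := by
  classical
  haveI : Nonempty (Fin n) := Fin.pos_iff_nonempty.mp hn
  haveI : Nonempty (Fin m) := Fin.pos_iff_nonempty.mp hm
  obtain ⟨lam, hlam⟩ := hx₀
  -- M x i = max_k (x_k - v_{i,k})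
  set M : (Fin n → ℝ) → Fin m → ℝ := fun x i => sSup (Set.range fun k => x k - v i k)
    with hMdef
  have hMle : ∀ (x : Fin n → ℝ) (i : Fin m) (j : Fin n), x j - v i j ≤ M x i := fun x i j =>
    le_sSup_range_aux (fun k => x k - v i k) j
  -- the covector of x₀
  set P : Fin m → Fin n → Prop := fun i j => x₀ j - v i j = M x₀ i with hPdef
  have hrow : ∀ i, ∃ j, P i j := fun i => exists_eq_sSup_range_aux (fun k => x₀ k - v i k)
  have hcol0 : ∀ j, ∃ i, P i j := by
    intro j
    obtain ⟨i, hi⟩ := exists_eq_sInf_range_aux (fun i => lam i + v i j)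
    refine ⟨i, ?_⟩
    have hxj : x₀ j - v i j = lam i := by rw [hlam j, ← hi]; ring
    have hub : ∀ k, x₀ k - v i k ≤ lam i := by
      intro k
      have h := sInf_range_le_aux (fun l => lam l + v l k) i
      rw [← hlam k] at h
      linarith
    have h1 : M x₀ i ≤ lam i :=
      csSup_le (Set.range_nonempty _) (by rintro _ ⟨k, rfl⟩; exact hub k)
    have h2 : lam i ≤ M x₀ i := hxj ▸ hMle x₀ i j
    show x₀ j - v i j = M x₀ i
    rw [hxj]; linarith
  -- column counts
  set c : Fin n → ℕ := fun j => (Finset.univ.filter (fun i => P i j)).card with hc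
  have hcpos : ∀ j, 0 < c j := by
    intro j
    obtain ⟨i, hi⟩ := hcol0 j
    exact Finset.card_pos.mpr ⟨i, Finset.mem_filter.mpr ⟨Finset.mem_univ i, hi⟩⟩
  -- the transportation plan
  set π : Fin m → Fin n → ℝ := fun i j => if P i j then 1 / (n * c j) else 0 with hπ
  have hπnn : ∀ i j, 0 ≤ π i j := by
    intro i j
    by_cases h : P i j
    · simp only [hπ, if_pos h]
      have h1 : (0 : ℝ) < n := by exact_mod_cast hn
      have h2 : (0 : ℝ) < c j := by exact_mod_cast hcpos j
      positivity
    · simp [hπ, if_neg h]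
  have hπpos : ∀ i j, P i j → 0 < π i j := by
    intro i j h
    simp only [hπ, if_pos h]
    have h1 : (0 : ℝ) < n := by exact_mod_cast hn
    have h2 : (0 : ℝ) < c j := by exact_mod_cast hcpos j
    positivity
  -- weights: row sums of π
  set w : Fin m → ℝ := fun i => ∑ j, π i j with hw
  have hwpos : ∀ i, 0 < w i := by
    intro i
    obtain ⟨j, hj⟩ := hrow i
    exact Finset.sum_pos' (fun j _ => hπnn i j) ⟨j, Finset.mem_univ j, hπpos i j hj⟩
  have hcolsum : ∀ j, ∑ i, π i j = 1 / n := by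
    intro j
    have h1 : ∑ i, π i j = ∑ i ∈ Finset.univ.filter (fun i => P i j), (1 / (n * c j) : ℝ) := by
      rw [Finset.sum_filter]
    rw [h1, Finset.sum_const, nsmul_eq_mul]
    have h2 : (c j : ℝ) ≠ 0 := Nat.cast_ne_zero.mpr (hcpos j).ne'
    have h3 : (n : ℝ) ≠ 0 := Nat.cast_ne_zero.mpr hn.ne'
    field_simp
    ring
  have hwsum : ∑ i, w i = 1 := by
    have h1 : ∑ i, w i = ∑ j, ∑ i, π i j := Finset.sum_comm
    rw [h1]
    rw [Finset.sum_congr rfl (fun j _ => hcolsum j), Finset.sum_const, nsmul_eq_mul]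
    have h3 : (n : ℝ) ≠ 0 := Nat.cast_ne_zero.mpr hn.ne'
    simp [Finset.card_univ]
    field_simp
  -- the "slack" function
  set D : (Fin n → ℝ) → ℝ := fun x => ∑ i, ∑ j, π i j * (M x i - (x j - v i j)) with hD
  have hDnn : ∀ x, 0 ≤ D x := fun x =>
    Finset.sum_nonneg fun i _ => Finset.sum_nonneg fun j _ =>
      mul_nonneg (hπnn i j) (by linarith [hMle x i j])
  have hDzero_of : ∀ x, (∀ i j, P i j → x j - v i j = M x i) → D x = 0 := by
    intro x hx
    refine Finset.sum_eq_zero fun i _ => Finset.sum_eq_zero fun j _ => ?_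
    by_cases h : P i j
    · rw [hx i j h]; ring
    · simp [hπ, if_neg h]
  have hDzero_to : ∀ x, D x = 0 → ∀ i j, P i j → x j - v i j = M x i := by
    intro x hx i j hij
    have hterm : ∀ i ∈ Finset.univ, (0:ℝ) ≤ ∑ j, π i j * (M x i - (x j - v i j)) :=
      fun i _ => Finset.sum_nonneg fun j _ =>
        mul_nonneg (hπnn i j) (by linarith [hMle x i j])
    have hi0 : ∑ j, π i j * (M x i - (x j - v i j)) = 0 :=
      (Finset.sum_eq_zero_iff_of_nonneg hterm).mp hx i (Finset.mem_univ i)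
    have hterm2 : ∀ j ∈ Finset.univ, (0:ℝ) ≤ π i j * (M x i - (x j - v i j)) :=
      fun j _ => mul_nonneg (hπnn i j) (by linarith [hMle x i j])
    have hj0 : π i j * (M x i - (x j - v i j)) = 0 :=
      (Finset.sum_eq_zero_iff_of_nonneg hterm2).mp hi0 j (Finset.mem_univ j)
    have hp := hπpos i j hij
    have := mul_eq_zero.mp hj0
    rcases this with h | h
    · exact absurd h hp.ne'
    · linarith
  have hDx₀ : D x₀ = 0 := hDzero_of x₀ (fun i j h => h)
  -- the constant K
  set K : ℝ := ∑ i, ∑ j, (w i - n * π i j) * v i j with hK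
  -- key identity
  have key : ∀ x, ∑ i, w i * dTrop x (v i) = n * D x + K := by
    intro x
    have hsplit : ∑ i, w i * dTrop x (v i)
        = (∑ i, ∑ j, ((n : ℝ) * π i j * M x i + w i * v i j)) - ∑ j, x j := by
      have hper : ∀ i, w i * dTrop x (v i)
          = (∑ j, ((n : ℝ) * π i j * M x i + w i * v i j)) - w i * ∑ j, x j := by
        intro i
        have hdt : dTrop x (v i) = (n : ℝ) * M x i + ∑ j, (v i j - x j) := rfl
        rw [hdt]
        rw [Finset.sum_add_distrib, Finset.sum_sub_distrib]
        have h1 : ∑ j, (n : ℝ) * π i j * M x i = (n : ℝ) * M x i * w i := by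
          rw [hw]
          rw [Finset.mul_sum]
          exact Finset.sum_congr rfl (fun j _ => by ring)
        have h2 : ∑ j, w i * v i j = w i * ∑ j, v i j := by
          rw [Finset.mul_sum]
        rw [h1, h2]
        ring
      rw [Finset.sum_congr rfl (fun i _ => hper i), Finset.sum_sub_distrib]
      congr 1
      rw [← Finset.sum_mul, hwsum, one_mul]
    have hsplit2 : (n : ℝ) * D x + K
        = (∑ i, ∑ j, ((n : ℝ) * π i j * M x i + w i * v i j)) - ∑ j, x j := by
      have h1 : (n : ℝ) * D x = ∑ i, ∑ j, (n : ℝ) * (π i j * (M x i - (x j - v i j))) := by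
        rw [hD, Finset.mul_sum]
        exact Finset.sum_congr rfl (fun i _ => Finset.mul_sum _ _ _)
      rw [h1, hK]
      rw [← Finset.sum_add_distrib]
      have h2 : ∀ i, (∑ j, (n : ℝ) * (π i j * (M x i - (x j - v i j))))
            + ∑ j, (w i - n * π i j) * v i j
          = ∑ j, (((n : ℝ) * π i j * M x i + w i * v i j) - (n : ℝ) * π i j * x j) := by
        intro i
        rw [← Finset.sum_add_distrib]
        exact Finset.sum_congr rfl (fun j _ => by ring)
      rw [Finset.sum_congr rfl (fun i _ => h2 i)]
      have h3 : ∑ i, ∑ j, (((n : ℝ) * π i j * M x i + w i * v i j) - (n : ℝ) * π i j * x j)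
          = (∑ i, ∑ j, ((n : ℝ) * π i j * M x i + w i * v i j))
            - ∑ i, ∑ j, (n : ℝ) * π i j * x j := by
        rw [← Finset.sum_sub_distrib]
        exact Finset.sum_congr rfl (fun i _ => Finset.sum_sub_distrib _ _)
      rw [h3]
      congr 1
      rw [Finset.sum_comm]
      refine Finset.sum_congr rfl (fun j _ => ?_)
      have h4 : ∑ i, (n : ℝ) * π i j * x j = (n : ℝ) * (∑ i, π i j) * x j := by
        rw [Finset.mul_sum, Finset.sum_mul]
      rw [h4, hcolsum j]
      have h3 : (n : ℝ) ≠ 0 := Nat.cast_ne_zero.mpr hn.ne'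
      field_simp
    rw [hsplit, hsplit2]
  -- conclusion
  refine ⟨w, hwpos, hwsum, ?_⟩
  ext x
  simp only [Set.mem_setOf_eq]
  have hnpos : (0 : ℝ) < n := by exact_mod_cast hn
  constructor
  · intro hmin i j hij
    have h := hmin x₀
    rw [key x, key x₀, hDx₀] at h
    have hDx : D x = 0 := by
      have := hDnn x
      nlinarith
    exact hDzero_to x hDx i j hij
  · intro hcell y
    have hDx : D x = 0 := hDzero_of x (fun i j h => hcell i j h)
    rw [key x, key y, hDx]
    have := hDnn y
    nlinarith
end

section
/- Let v_1, …, v_m ∈ ℝ^n be data points. For every point x₀ of the min-tropical convex hull tconv(v_1,…,v_m) there exists a weight vector w ∈ ℝ^m (with w_i > 0 and Σ w_i = 1) such that x₀ minimizes F(x) = Σ_{i=1}^m w_i·d_Δ(x, v_i) over ℝ^n; i.e., every point of the tropical convex hull of the data is a weighted Fermat–Weber point for some choice of weights. -/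
theorem tconv_point_is_fermatWeber_point
    (m n : ℕ) (hm : 0 < m) (hn : 0 < n)
    (v : Fin m → Fin n → ℝ) (x₀ : Fin n → ℝ)
    (hx₀ : ∃ lam : Fin m → ℝ, ∀ j : Fin n,
      x₀ j = sInf (Set.range fun i : Fin m => lam i + v i j)) :
    ∃ w : Fin m → ℝ, (∀ i, 0 < w i) ∧ ∑ i, w i = 1 ∧
      ∀ y : Fin n → ℝ,
        ∑ i, w i * dTrop x₀ (v i) ≤ ∑ i, w i * dTrop y (v i) := by
  classical
  obtain ⟨lam, hlam⟩ := hx₀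
  haveI : Nonempty (Fin n) := Fin.pos_iff_nonempty.mp hn
  haveI : Nonempty (Fin m) := Fin.pos_iff_nonempty.mp hm
  set P : Fin m → Fin n → Prop := fun i j => ∀ j', x₀ j' - v i j' ≤ x₀ j - v i j with hP
  -- every i has an argmax column
  have hS : ∀ i, ∃ j, P i j := by
    intro i
    obtain ⟨j, hj⟩ := Finite.exists_max (fun j => x₀ j - v i j)
    exact ⟨j, hj⟩
  -- every j lies in some argmax set
  have hT : ∀ j, ∃ i, P i j := by
    intro j
    have hmem : sInf (Set.range fun i : Fin m => lam i + v i j) ∈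
        Set.range fun i : Fin m => lam i + v i j :=
      (Set.range_nonempty _).csInf_mem (Set.finite_range _)
    obtain ⟨i, hi⟩ := hmem
    refine ⟨i, fun j' => ?_⟩
    have h1 : x₀ j' ≤ lam i + v i j' := by
      rw [hlam j']
      exact csInf_le (Set.finite_range _).bddBelow ⟨i, rfl⟩
    have h2 : x₀ j - v i j = lam i := by rw [hlam j, ← hi]; ring
    linarith
  set T : Fin n → Finset (Fin m) := fun j => Finset.univ.filter (fun i => P i j) with hTdef
  have hTcard : ∀ j, 0 < (T j).card := by
    intro j
    obtain ⟨i, hi⟩ := hT j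
    exact Finset.card_pos.mpr ⟨i, Finset.mem_filter.mpr ⟨Finset.mem_univ i, hi⟩⟩
  set A : Fin m → Fin n → ℝ := fun i j =>
    if P i j then 1 / ((n : ℝ) * (T j).card) else 0 with hA
  have hApos : ∀ i j, P i j → 0 < A i j := by
    intro i j h
    simp only [hA, if_pos h]
    apply div_pos one_pos
    apply mul_pos
    · exact_mod_cast hn
    · exact_mod_cast hTcard j
  have hAnonneg : ∀ i j, 0 ≤ A i j := by
    intro i j
    by_cases h : P i j
    · exact le_of_lt (hApos i j h)
    · simp [hA, if_neg h]
  have hAzero : ∀ i j, ¬ P i j → A i j = 0 := by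
    intro i j h; simp [hA, if_neg h]
  -- column sums are 1/n
  have hcol : ∀ j, ∑ i, A i j = 1 / n := by
    intro j
    have hn' : (n : ℝ) ≠ 0 := by exact_mod_cast hn.ne'
    have hc' : ((T j).card : ℝ) ≠ 0 := by exact_mod_cast (hTcard j).ne'
    simp only [hA]
    rw [← Finset.sum_filter]
    rw [Finset.sum_const, nsmul_eq_mul]
    show ((T j).card : ℝ) * (1 / ((n : ℝ) * (T j).card)) = 1 / n
    field_simp
  set w : Fin m → ℝ := fun i => ∑ j, A i j with hw
  have hwpos : ∀ i, 0 < w i := by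
    intro i
    obtain ⟨j, hj⟩ := hS i
    exact Finset.sum_pos' (fun j' _ => hAnonneg i j') ⟨j, Finset.mem_univ j, hApos i j hj⟩
  have hwsum : ∑ i, w i = 1 := by
    have hn' : (n : ℝ) ≠ 0 := by exact_mod_cast hn.ne'
    simp only [hw]
    rw [Finset.sum_comm]
    simp only [hcol]
    rw [Finset.sum_const, nsmul_eq_mul]
    simp only [Finset.card_univ, Fintype.card_fin]
    field_simp
  refine ⟨w, hwpos, hwsum, ?_⟩
  intro y
  set M : Fin m → (Fin n → ℝ) → ℝ := fun i z => sSup (Set.range fun j => z j - v i j) with hM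
  have hMle : ∀ i (z : Fin n → ℝ) j, z j - v i j ≤ M i z := by
    intro i z j
    exact le_csSup (Set.finite_range _).bddAbove ⟨j, rfl⟩
  have hMeq : ∀ i j, P i j → M i x₀ = x₀ j - v i j := by
    intro i j h
    apply le_antisymm
    · apply csSup_le (Set.range_nonempty _)
      rintro b ⟨j', rfl⟩
      exact h j'
    · exact hMle i x₀ j
  -- key subgradient inequality
  have key : ∑ j, (1 / (n : ℝ)) * (y j - x₀ j) ≤ ∑ i, w i * (M i y - M i x₀) := by
    have h1 : ∀ i, ∑ j, A i j * (y j - x₀ j) ≤ w i * (M i y - M i x₀) := by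
      intro i
      have : w i * (M i y - M i x₀) = ∑ j, A i j * (M i y - M i x₀) := by
        rw [hw, Finset.sum_mul]
      rw [this]
      apply Finset.sum_le_sum
      intro j _
      by_cases h : P i j
      · apply mul_le_mul_of_nonneg_left _ (hAnonneg i j)
        have h2 := hMeq i j h
        have h3 := hMle i y j
        linarith
      · simp [hAzero i j h]
    calc ∑ j, (1 / (n : ℝ)) * (y j - x₀ j)
        = ∑ j, (∑ i, A i j) * (y j - x₀ j) := by
          apply Finset.sum_congr rfl; intro j _; rw [hcol]
      _ = ∑ i, ∑ j, A i j * (y j - x₀ j) := by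
          rw [Finset.sum_comm]
          apply Finset.sum_congr rfl; intro j _
          rw [Finset.sum_mul]
      _ ≤ ∑ i, w i * (M i y - M i x₀) := Finset.sum_le_sum fun i _ => h1 i
  -- expand the objective
  have expand : ∀ z : Fin n → ℝ, ∑ i, w i * dTrop z (v i)
      = (n : ℝ) * (∑ i, w i * M i z) + ((∑ i, w i * ∑ j, v i j) - ∑ j, z j) := by
    intro z
    have : ∀ i : Fin m, w i * dTrop z (v i)
        = (n : ℝ) * (w i * M i z) + (w i * ∑ j, v i j - w i * ∑ j, z j) := by
      intro i
      show w i * ((n : ℝ) * sSup (Set.range fun j => z j - v i j) + ∑ j, (v i j - z j)) = _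
      rw [Finset.sum_sub_distrib]
      show w i * ((n : ℝ) * M i z + (∑ j, v i j - ∑ j, z j)) = _
      ring
    rw [Finset.sum_congr rfl fun i _ => this i]
    rw [Finset.sum_add_distrib, Finset.sum_sub_distrib, ← Finset.mul_sum]
    congr 1
    rw [← Finset.sum_mul, hwsum, one_mul]
  rw [expand x₀, expand y]
  have hkey2 : ∑ j, (1 / (n : ℝ)) * (y j - x₀ j) = (1 / (n : ℝ)) * (∑ j, y j - ∑ j, x₀ j) := by
    rw [← Finset.sum_sub_distrib, Finset.mul_sum]
  rw [hkey2] at key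
  have hn' : (0 : ℝ) < n := by exact_mod_cast hn
  have hmul := mul_le_mul_of_nonneg_left key (le_of_lt hn')
  have hsplit : ∑ i, w i * (M i y - M i x₀) = ∑ i, w i * M i y - ∑ i, w i * M i x₀ := by
    rw [← Finset.sum_sub_distrib]
    apply Finset.sum_congr rfl; intro i _; ring
  rw [hsplit] at hmul
  have : (n : ℝ) * ((1 / (n : ℝ)) * (∑ j, y j - ∑ j, x₀ j)) = ∑ j, y j - ∑ j, x₀ j := by
    field_simp
  rw [this] at hmul
  linarith
end

section
/- Let v_1, …, v_m ∈ ℝ^n be data points and let w ∈ ℝ^m be a weight vector. A point x₀ ∈ ℝ^n minimizes F(x) = Σ_{i=1}^m w_i·d_Δ(x, v_i) over ℝ^n if and only if (1/n)·𝟙_n belongs to the Minkowski sum Σ_{i=1}^m w_i · conv{ e_j : x₀_j − v_{i,j} = max_{1≤k≤n}(x₀_k − v_{i,k}) }, where e_1,…,e_n are the standard basis vectors of ℝ^n, conv denotes the convex hull, w_i·S denotes the scaling of a set S by w_i, and the sum of sets is Minkowski addition. -/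
open Pointwise

lemma sSup_range_le' {n : ℕ} (g : Fin n → ℝ) (k : Fin n) :
    g k ≤ sSup (Set.range g) :=
  le_csSup (Set.finite_range g).bddAbove (Set.mem_range_self k)

lemma exists_sSup_range' {n : ℕ} (hn : 0 < n) (g : Fin n → ℝ) :
    ∃ j, g j = sSup (Set.range g) := by
  have : Nonempty (Fin n) := ⟨⟨0, hn⟩⟩
  obtain ⟨j, hj⟩ := (Set.range_nonempty g).csSup_mem (Set.finite_range g)
  exact ⟨j, hj⟩

lemma sSup_range_eq' {n : ℕ} (hn : 0 < n) (g : Fin n → ℝ) {a : ℝ}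
    (hub : ∀ k, g k ≤ a) {j : Fin n} (hj : g j = a) :
    sSup (Set.range g) = a := by
  have : Nonempty (Fin n) := ⟨⟨0, hn⟩⟩
  refine le_antisymm (csSup_le (Set.range_nonempty g) ?_) ?_
  · rintro x ⟨k, rfl⟩; exact hub k
  · calc a = g j := hj.symm
      _ ≤ _ := sSup_range_le' g j

lemma hull_mem_props {n : ℕ} (d : Fin n → ℝ) (M : ℝ)
    {q : Fin n → ℝ}
    (hq : q ∈ convexHull ℝ {p : Fin n → ℝ | ∃ j, d j = M ∧ p = Pi.single j 1}) :
    (∀ j, 0 ≤ q j) ∧ (∑ j, q j = 1) ∧ (∑ j, q j * d j = M) := by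
  set C : Set (Fin n → ℝ) :=
    {a : Fin n → ℝ | (∀ j, 0 ≤ a j) ∧ (∑ j, a j = 1) ∧ (∑ j, a j * d j = M)} with hC
  have hsub : {p : Fin n → ℝ | ∃ j, d j = M ∧ p = Pi.single j 1} ⊆ C := by
    rintro p ⟨j, hdj, rfl⟩
    refine ⟨fun k => ?_, ?_, ?_⟩
    · by_cases h : k = j <;> simp [Pi.single_apply, h]
    · simp [Pi.single_apply]
    · simp [Pi.single_apply, ite_mul, hdj]
  have hconv : Convex ℝ C := by
    rintro a ⟨ha0, ha1, haM⟩ b ⟨hb0, hb1, hbM⟩ s t hs ht hst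
    refine ⟨fun j => add_nonneg (mul_nonneg hs (ha0 j)) (mul_nonneg ht (hb0 j)), ?_, ?_⟩
    · simp only [Pi.add_apply, Pi.smul_apply, smul_eq_mul]
      rw [Finset.sum_add_distrib, ← Finset.mul_sum, ← Finset.mul_sum, ha1, hb1]
      linarith
    · simp only [Pi.add_apply, Pi.smul_apply, smul_eq_mul, add_mul]
      rw [Finset.sum_add_distrib]
      simp_rw [mul_assoc]
      rw [← Finset.mul_sum, ← Finset.mul_sum, haM, hbM, ← add_mul, hst, one_mul]
  exact convexHull_min hsub hconv hq

lemma convex_sum_sets {ι E : Type*} [AddCommGroup E] [Module ℝ E]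
    (s : Finset ι) (F : ι → Set E) (h : ∀ i ∈ s, Convex ℝ (F i)) :
    Convex ℝ (∑ i ∈ s, F i) := by
  classical
  induction s using Finset.induction_on with
  | empty =>
      rw [Finset.sum_empty]
      exact convex_singleton (𝕜 := ℝ) (0 : E)
  | insert _ _ ha ih =>
      rw [Finset.sum_insert ha]
      exact (h _ (Finset.mem_insert_self _ _)).add
        (ih fun i hi => h i (Finset.mem_insert_of_mem hi))

lemma isCompact_sum_sets {ι E : Type*} [AddCommGroup E] [TopologicalSpace E]
    [IsTopologicalAddGroup E] (s : Finset ι) (F : ι → Set E)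
    (h : ∀ i ∈ s, IsCompact (F i)) : IsCompact (∑ i ∈ s, F i) := by
  classical
  induction s using Finset.induction_on with
  | empty =>
      rw [Finset.sum_empty]
      exact isCompact_singleton
  | insert _ _ ha ih =>
      rw [Finset.sum_insert ha]
      exact (h _ (Finset.mem_insert_self _ _)).add
        (ih fun i hi => h i (Finset.mem_insert_of_mem hi))

lemma eval_clm {n : ℕ} (f : (Fin n → ℝ) →L[ℝ] ℝ) (x : Fin n → ℝ) :
    f x = ∑ j, x j * f (Pi.single j 1) := by
  have hx : (∑ j, x j • (Pi.single j (1:ℝ) : Fin n → ℝ)) = x := by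
    ext k
    simp [Pi.single_apply, Finset.sum_apply, mul_ite]
  conv_lhs => rw [← hx]
  rw [map_sum]
  simp [smul_eq_mul]

theorem fermatWeber_iff_barycenter_in_mixed_cell
    (m n : ℕ) (hm : 0 < m) (hn : 0 < n)
    (v : Fin m → Fin n → ℝ) (w : Fin m → ℝ)
    (hw : ∀ i, 0 < w i) (hw1 : ∑ i, w i = 1)
    (x₀ : Fin n → ℝ) :
    (∀ y : Fin n → ℝ,
        ∑ i, w i * dTrop x₀ (v i) ≤ ∑ i, w i * dTrop y (v i)) ↔
    (fun _ : Fin n => 1 / (n : ℝ)) ∈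
      ∑ i : Fin m, w i • convexHull ℝ
        {p : Fin n → ℝ | ∃ j : Fin n,
          x₀ j - v i j = sSup (Set.range fun k : Fin n => x₀ k - v i k) ∧
          p = Pi.single j 1} := by
  classical
  have hn' : (0:ℝ) < n := by exact_mod_cast hn
  set M : Fin m → ℝ := fun i => sSup (Set.range fun k : Fin n => x₀ k - v i k) with hM
  constructor
  · intro hopt
    by_contra hnotmem
    have hAfin : ∀ i : Fin m, ({p : Fin n → ℝ | ∃ j : Fin n,
        x₀ j - v i j = M i ∧ p = Pi.single j 1}).Finite := fun i =>
      Set.Finite.subset (Set.finite_range fun j => (Pi.single j 1 : Fin n → ℝ))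
        (by rintro p ⟨j, _, rfl⟩; exact ⟨j, rfl⟩)
    have hconv : Convex ℝ (∑ i : Fin m, w i • convexHull ℝ
        {p : Fin n → ℝ | ∃ j : Fin n, x₀ j - v i j = M i ∧ p = Pi.single j 1}) :=
      convex_sum_sets _ _ fun i _ => (convex_convexHull ℝ _).smul (w i)
    have hcpt : IsCompact (∑ i : Fin m, w i • convexHull ℝ
        {p : Fin n → ℝ | ∃ j : Fin n, x₀ j - v i j = M i ∧ p = Pi.single j 1}) :=
      isCompact_sum_sets _ _ fun i _ => ((hAfin i).isCompact_convexHull (𝕜 := ℝ)).smul (w i)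
    obtain ⟨f, u, hfu, hub⟩ :=
      geometric_hahn_banach_point_closed hconv hcpt.isClosed hnotmem
    set c : Fin n → ℝ := fun j => f (Pi.single j 1) with hcdef
    have hact : ∀ i, ∃ j, x₀ j - v i j = M i := fun i =>
      exists_sSup_range' hn (fun k => x₀ k - v i k)
    set act : Fin m → Finset (Fin n) :=
      fun i => Finset.univ.filter (fun j => x₀ j - v i j = M i) with hactdef
    have hactne : ∀ i, (act i).Nonempty := fun i =>
      (hact i).imp fun j hj => Finset.mem_filter.mpr ⟨Finset.mem_univ _, hj⟩
    set μ : Fin m → ℝ := fun i => (act i).inf' (hactne i) c with hμ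
    choose jmin hjmem hjval using fun i => Finset.exists_mem_eq_inf' (hactne i) c
    have hjact : ∀ i, x₀ (jmin i) - v i (jmin i) = M i := fun i =>
      (Finset.mem_filter.mp (hjmem i)).2
    have hμval : ∀ i, μ i = c (jmin i) := fun i => hjval i
    have hμle : ∀ i, ∀ k, x₀ k - v i k = M i → μ i ≤ c k := fun i k hk =>
      Finset.inf'_le c (Finset.mem_filter.mpr ⟨Finset.mem_univ _, hk⟩)
    have hp₀ : (∑ i, w i • (Pi.single (jmin i) 1 : Fin n → ℝ)) ∈
        ∑ i : Fin m, w i • convexHull ℝ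
          {p : Fin n → ℝ | ∃ j : Fin n, x₀ j - v i j = M i ∧ p = Pi.single j 1} :=
      Set.finset_sum_mem_finset_sum _ _ _ fun i _ =>
        Set.smul_mem_smul_set (subset_convexHull ℝ _ ⟨jmin i, hjact i, rfl⟩)
    have hsep := hfu.trans (hub _ hp₀)
    have hfbary : f (fun _ : Fin n => 1/(n:ℝ)) = (1/(n:ℝ)) * ∑ j, c j := by
      rw [eval_clm, Finset.mul_sum]
    have hfp₀ : f (∑ i, w i • (Pi.single (jmin i) 1 : Fin n → ℝ)) = ∑ i, w i * μ i := by
      rw [map_sum]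
      exact Finset.sum_congr rfl fun i _ => by rw [map_smul, smul_eq_mul, hμval i, hcdef]
    have hD : (1/(n:ℝ)) * ∑ j, c j < ∑ i, w i * μ i := by
      rw [← hfbary, ← hfp₀]; exact hsep
    have hD' : ∑ j, c j < (n:ℝ) * ∑ i, w i * μ i := by
      have h := (mul_lt_mul_iff_right₀ hn').mpr hD
      rwa [← mul_assoc, mul_one_div_cancel hn'.ne', one_mul] at h
    have hne : (Finset.univ : Finset (Fin m × Fin n)).Nonempty :=
      ⟨⟨⟨0, hm⟩, ⟨0, hn⟩⟩, Finset.mem_univ _⟩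
    set G := Finset.univ.inf' hne (fun ik : Fin m × Fin n =>
      if x₀ ik.2 - v ik.1 ik.2 = M ik.1 then 1 else M ik.1 - (x₀ ik.2 - v ik.1 ik.2)) with hGdef
    have hG : 0 < G := by
      rw [hGdef, Finset.lt_inf'_iff]
      rintro ⟨i, k⟩ -
      dsimp only
      split_ifs with h
      · norm_num
      · have hle : x₀ k - v i k ≤ M i := by
          rw [hM]; exact sSup_range_le' (fun k => x₀ k - v i k) k
        have : x₀ k - v i k < M i := lt_of_le_of_ne hle h
        linarith
    set B := 1 + Finset.univ.sup' hne (fun ik : Fin m × Fin n => μ ik.1 - c ik.2) with hBdef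
    have hbound : ∀ (i : Fin m) (k : Fin n), μ i - c k ≤ B - 1 := by
      intro i k
      have := Finset.le_sup' (fun ik : Fin m × Fin n => μ ik.1 - c ik.2)
        (Finset.mem_univ (⟨i, k⟩ : Fin m × Fin n))
      rw [hBdef]; dsimp only at this; linarith
    have hB : 0 < B := by
      have h0 := hbound ⟨0, hm⟩ (jmin ⟨0, hm⟩)
      rw [hμval] at h0
      linarith
    set t := G / B with htdef
    have ht : 0 < t := div_pos hG hB
    have hkey : ∀ (i : Fin m) (k : Fin n), t * (μ i - c k) ≤ G := by
      intro i k
      have h1 : μ i - c k ≤ B := by have := hbound i k; linarith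
      calc t * (μ i - c k) ≤ t * B := mul_le_mul_of_nonneg_left h1 ht.le
        _ = G := by rw [htdef, div_mul_cancel₀ _ hB.ne']
    set y : Fin n → ℝ := fun k => x₀ k - t * c k with hy
    have hMy : ∀ i, sSup (Set.range fun k => y k - v i k) = M i - t * μ i := by
      intro i
      apply sSup_range_eq' hn (fun k => y k - v i k) (j := jmin i)
      · intro k
        show x₀ k - t * c k - v i k ≤ M i - t * μ i
        by_cases h : x₀ k - v i k = M i
        · have h1 : μ i ≤ c k := hμle i k h
          have h2 := mul_le_mul_of_nonneg_left h1 ht.le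
          linarith
        · have hgap : G ≤ M i - (x₀ k - v i k) := by
            have h2 := Finset.inf'_le (fun ik : Fin m × Fin n =>
              if x₀ ik.2 - v ik.1 ik.2 = M ik.1 then 1
              else M ik.1 - (x₀ ik.2 - v ik.1 ik.2))
              (Finset.mem_univ (⟨i, k⟩ : Fin m × Fin n))
            rw [hGdef]
            simpa only [h, ↓reduceIte] using h2
          have h3 := hkey i k
          linarith
      · show x₀ (jmin i) - t * c (jmin i) - v i (jmin i) = M i - t * μ i
        rw [hμval i]
        linarith [hjact i]
    have hterm : ∀ i, dTrop y (v i) = dTrop x₀ (v i) - (n:ℝ) * (t * μ i) + t * ∑ k, c k := by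
      intro i
      rw [dTrop, dTrop, hMy i]
      have hsum2 : ∑ k, (v i k - y k) = ∑ k, (v i k - x₀ k) + t * ∑ k, c k := by
        rw [Finset.mul_sum, ← Finset.sum_add_distrib]
        refine Finset.sum_congr rfl fun k _ => ?_
        show v i k - (x₀ k - t * c k) = _
        ring
      rw [hsum2]
      have hMi : sSup (Set.range fun k => x₀ k - v i k) = M i := by rw [hM]
      rw [hMi]; ring
    have hFy : ∑ i, w i * dTrop y (v i) =
        ∑ i, w i * dTrop x₀ (v i) - t * ((n:ℝ) * ∑ i, w i * μ i) + t * ∑ k, c k := by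
      have e0 : ∑ i, w i * dTrop y (v i) =
          ∑ i, (w i * dTrop x₀ (v i) - t * ((n:ℝ) * (w i * μ i)) + t * (∑ k, c k) * w i) :=
        Finset.sum_congr rfl fun i _ => by rw [hterm i]; ring
      have e1 : ∑ i, t * ((n:ℝ) * (w i * μ i)) = t * ((n:ℝ) * ∑ i, w i * μ i) := by
        rw [← Finset.mul_sum, ← Finset.mul_sum]
      have e2 : ∑ i, t * (∑ k, c k) * w i = t * ∑ k, c k := by
        rw [← Finset.mul_sum, hw1, mul_one]
      rw [e0, Finset.sum_add_distrib, Finset.sum_sub_distrib, e1, e2]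
    have hcontr := hopt y
    rw [hFy] at hcontr
    have hexp : t * ((n:ℝ) * ∑ i, w i * μ i) - t * ∑ k, c k =
        t * ((n:ℝ) * ∑ i, w i * μ i - ∑ k, c k) := by ring
    have hpos : 0 < t * ((n:ℝ) * ∑ i, w i * μ i - ∑ k, c k) :=
      mul_pos ht (by linarith)
    linarith
  · intro hmem y
    rw [Set.mem_fintype_sum] at hmem
    obtain ⟨g, hg, hsum⟩ := hmem
    choose q hqhull hqeq using fun i => Set.mem_smul_set.mp (hg i)
    have props : ∀ i, (∀ j, 0 ≤ q i j) ∧ (∑ j, q i j = 1) ∧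
        (∑ j, q i j * (x₀ j - v i j) = M i) :=
      fun i => hull_mem_props (fun j => x₀ j - v i j) (M i) (hqhull i)
    -- column sums
    have hcol : ∀ j, ∑ i, w i * q i j = 1 / n := by
      intro j
      have := congrFun hsum j
      rw [Finset.sum_apply] at this
      simpa [← hqeq, smul_eq_mul] using this
    -- per-i inequality
    have hstep : ∀ i, w i * dTrop x₀ (v i) +
        w i * ((n:ℝ) * ∑ j, q i j * (y j - x₀ j) + ∑ k, (x₀ k - y k))
          ≤ w i * dTrop y (v i) := by
      intro i
      rw [← mul_add]
      refine mul_le_mul_of_nonneg_left ?_ (hw i).le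
      obtain ⟨h0, h1, h2⟩ := props i
      have hMy : ∑ j, q i j * (y j - v i j) ≤ sSup (Set.range fun k => y k - v i k) := by
        calc ∑ j, q i j * (y j - v i j)
            ≤ ∑ j, q i j * sSup (Set.range fun k => y k - v i k) :=
              Finset.sum_le_sum fun j _ =>
                mul_le_mul_of_nonneg_left (sSup_range_le' (fun k => y k - v i k) j) (h0 j)
          _ = _ := by rw [← Finset.sum_mul, h1, one_mul]
      have h4 : ∑ j, q i j * (y j - x₀ j)
          = ∑ j, q i j * (y j - v i j) - ∑ j, q i j * (x₀ j - v i j) := by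
        rw [← Finset.sum_sub_distrib]
        exact Finset.sum_congr rfl fun j _ => by ring
      have h3 : ∑ k, (v i k - x₀ k) + ∑ k, (x₀ k - y k) = ∑ k, (v i k - y k) := by
        rw [← Finset.sum_add_distrib]
        exact Finset.sum_congr rfl fun k _ => by ring
      have hn1 : (n:ℝ) * ∑ j, q i j * (y j - v i j)
          ≤ (n:ℝ) * sSup (Set.range fun k => y k - v i k) :=
        mul_le_mul_of_nonneg_left hMy (by positivity)
      have hn4 : (n:ℝ) * ∑ j, q i j * (y j - x₀ j)
          = (n:ℝ) * ∑ j, q i j * (y j - v i j) - (n:ℝ) * M i := by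
        rw [h4, h2]; ring
      show (n:ℝ) * M i + _ + _ ≤ _
      rw [dTrop]
      linarith [hn1, hn4, h3]
    have htot := Finset.sum_le_sum fun i (_ : i ∈ Finset.univ) => hstep i
    rw [Finset.sum_add_distrib] at htot
    -- the correction term sums to zero
    have hzero : ∑ i, w i * ((n:ℝ) * ∑ j, q i j * (y j - x₀ j) + ∑ k, (x₀ k - y k)) = 0 := by
      have e1 : ∑ i, w i * ∑ j, q i j * (y j - x₀ j)
          = ∑ j, (∑ i, w i * q i j) * (y j - x₀ j) := by
        simp_rw [Finset.mul_sum, ← mul_assoc]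
        rw [Finset.sum_comm]
        exact Finset.sum_congr rfl fun j _ => by rw [Finset.sum_mul]
      have e2 : ∑ j, (∑ i, w i * q i j) * (y j - x₀ j)
          = (1/(n:ℝ)) * ∑ j, (y j - x₀ j) := by
        rw [Finset.mul_sum]
        exact Finset.sum_congr rfl fun j _ => by rw [hcol j]
      have e3 : ∑ k, (x₀ k - y k) = -∑ j, (y j - x₀ j) := by
        rw [← Finset.sum_neg_distrib]
        exact Finset.sum_congr rfl fun k _ => by ring
      simp_rw [mul_add, Finset.sum_add_distrib, mul_comm (w _) ((n:ℝ) * _), mul_assoc]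
      rw [← Finset.mul_sum]
      simp_rw [mul_comm (∑ j, q _ j * (y j - x₀ j)) (w _)]
      rw [e1, e2, ← Finset.sum_mul, hw1, one_mul, e3]
      field_simp
      ring
    rw [hzero, add_zero] at htot
    exact htot
end

section
/- Let L ≥ 3, let P be the set of 2-element subsets of {1,…,L}, and let v_1, …, v_m ∈ ℝ^P each satisfy the negated three-point condition: for all distinct a, b, c ∈ {1,…,L}, the minimum of v_i({a,b}), v_i({a,c}), v_i({b,c}) is attained at least twice. Let w ∈ ℝ^m be a weight vector. Then every minimizer x ∈ ℝ^P of F(x) = Σ_{i=1}^m w_i·d_Δ(x, v_i) over ℝ^P also satisfies the negated three-point condition: for all distinct a, b, c ∈ {1,…,L}, the minimum of x({a,b}), x({a,c}), x({b,c}) is attained at least twice. -/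
/-- The set of 2-element subsets of `Fin L`, indexing coordinates of (negated)
tree distance vectors. -/
abbrev Pairs (L : ℕ) := {s : Finset (Fin L) // s.card = 2}

/-- The pair `{a, b}` for distinct `a b`. -/
def pr {L : ℕ} (a b : Fin L) (h : a ≠ b) : Pairs L :=
  ⟨{a, b}, Finset.card_pair h⟩

/-- The asymmetric tropical distance on `ℝ^α`:
`d_Δ(x,y) = |α|·max_p(x_p − y_p) + Σ_p (y_p − x_p)`. -/
noncomputable def dTropG {α : Type*} [Fintype α] (x y : α → ℝ) : ℝ :=
  (Fintype.card α : ℝ) * sSup (Set.range fun p => x p - y p) + ∑ p, (y p - x p)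

/-- The minimum of three reals is attained at least twice. -/
def minTwice (x y z : ℝ) : Prop :=
  (x = y ∧ x ≤ z) ∨ (x = z ∧ x ≤ y) ∨ (y = z ∧ y ≤ x)

lemma not_minTwice_cases {X Y Z : ℝ} (h : ¬ minTwice X Y Z) :
    (X < Y ∧ X < Z) ∨ (Y < X ∧ Y < Z) ∨ (Z < X ∧ Z < Y) := by
  unfold minTwice at h
  push_neg at h
  obtain ⟨h1, h2, h3⟩ := h
  rcases lt_trichotomy X Y with hxy | hxy | hxy
  · rcases lt_trichotomy X Z with hxz | hxz | hxz
    · exact Or.inl ⟨hxy, hxz⟩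
    · exact absurd hxy (by linarith [h2 hxz])
    · exact Or.inr (Or.inr ⟨hxz, by linarith⟩)
  · exact Or.inr (Or.inr ⟨h1 hxy, by linarith [h1 hxy]⟩)
  · rcases lt_trichotomy Y Z with hyz | hyz | hyz
    · exact Or.inr (Or.inl ⟨hxy, hyz⟩)
    · exact absurd hxy (by linarith [h3 hyz])
    · exact Or.inr (Or.inr ⟨by linarith, hyz⟩)

lemma stepA {α : Type*} [Fintype α] {m : ℕ} (hm : 0 < m)
    (v : Fin m → α → ℝ) (w : Fin m → ℝ) (hw : ∀ i, 0 < w i) (hw1 : ∑ i, w i = 1)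
    (x : α → ℝ)
    (hmin : ∀ y : α → ℝ,
      ∑ i, w i * dTropG x (v i) ≤ ∑ i, w i * dTropG y (v i))
    (q : α) :
    ∃ i, x q - v i q = sSup (Set.range fun p => x p - v i p) := by
  classical
  haveI : Nonempty α := ⟨q⟩
  haveI : Nonempty (Fin m) := ⟨⟨0, hm⟩⟩
  by_contra hc
  push_neg at hc
  set M : Fin m → ℝ := fun i => sSup (Set.range fun p => x p - v i p) with hM
  have hub : ∀ i p, x p - v i p ≤ M i := fun i p =>
    le_csSup (Set.finite_range _).bddAbove ⟨p, rfl⟩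
  have hlt : ∀ i, x q - v i q < M i := fun i => lt_of_le_of_ne (hub i q) (hc i)
  set ε : ℝ := Finset.univ.inf' Finset.univ_nonempty (fun i => M i - (x q - v i q)) with hε
  have hεpos : 0 < ε := by
    rw [hε, Finset.lt_inf'_iff]
    exact fun i _ => sub_pos.mpr (hlt i)
  have hεle : ∀ i, ε ≤ M i - (x q - v i q) := fun i =>
    Finset.inf'_le _ (Finset.mem_univ i)
  set y : α → ℝ := fun p => x p + if p = q then ε else 0 with hy
  have hdist : ∀ i, dTropG y (v i) = dTropG x (v i) - ε := by
    intro i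
    have hyub : ∀ p, y p - v i p ≤ M i := by
      intro p
      by_cases hp : p = q
      · subst hp; simp [hy]; linarith [hεle i]
      · simp only [hy, if_neg hp]; simpa using hub i p
    obtain ⟨p0, hp0⟩ : M i ∈ Set.range fun p => x p - v i p :=
      (Set.range_nonempty _).csSup_mem (Set.finite_range _)
    have hp0q : p0 ≠ q := by
      intro h; rw [h] at hp0; exact (hlt i).ne hp0
    have hy0 : y p0 - v i p0 = M i := by
      simp only [hy, if_neg hp0q]; simpa using hp0
    have hsup : sSup (Set.range fun p => y p - v i p) = M i := by
      refine le_antisymm (csSup_le (Set.range_nonempty _) ?_)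
        (hy0 ▸ le_csSup (Set.finite_range _).bddAbove ⟨p0, rfl⟩)
      rintro _ ⟨p, rfl⟩; exact hyub p
    have hsum : ∑ p, (v i p - y p) = (∑ p, (v i p - x p)) - ε := by
      have : ∀ p, v i p - y p = (v i p - x p) - (if p = q then ε else 0) := by
        intro p; simp only [hy]; ring
      rw [Finset.sum_congr rfl fun p _ => this p, Finset.sum_sub_distrib,
        Finset.sum_ite_eq' Finset.univ q (fun _ => ε)]
      simp
    simp only [dTropG, hsup, hsum, hM]
    ring
  have hFy : ∑ i, w i * dTropG y (v i) = (∑ i, w i * dTropG x (v i)) - ε := by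
    calc ∑ i, w i * dTropG y (v i) = ∑ i, (w i * dTropG x (v i) - w i * ε) := by
          refine Finset.sum_congr rfl fun i _ => ?_
          rw [hdist i]; ring
      _ = (∑ i, w i * dTropG x (v i)) - (∑ i, w i) * ε := by
          rw [Finset.sum_sub_distrib, ← Finset.sum_mul]
      _ = (∑ i, w i * dTropG x (v i)) - ε := by rw [hw1]; ring
  have := hmin y
  rw [hFy] at this
  linarith

lemma key {α : Type*} [Fintype α] {m : ℕ} (hm : 0 < m)
    (v : Fin m → α → ℝ) (w : Fin m → ℝ) (hw : ∀ i, 0 < w i) (hw1 : ∑ i, w i = 1)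
    (x : α → ℝ)
    (hmin : ∀ y : α → ℝ,
      ∑ i, w i * dTropG x (v i) ≤ ∑ i, w i * dTropG y (v i))
    (q r s : α) (hxr : x q < x r) (hxs : x q < x s) :
    ∃ i, v i q < v i r ∧ v i q < v i s := by
  obtain ⟨i, hi⟩ := stepA hm v w hw hw1 x hmin q
  have h1 : x r - v i r ≤ x q - v i q :=
    hi ▸ le_csSup (Set.finite_range _).bddAbove ⟨r, rfl⟩
  have h2 : x s - v i s ≤ x q - v i q :=
    hi ▸ le_csSup (Set.finite_range _).bddAbove ⟨s, rfl⟩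
  exact ⟨i, by linarith, by linarith⟩

theorem fermatWeber_of_negated_ultrametrics_is_negated_ultrametric
    (L : ℕ) (hL : 3 ≤ L) (m : ℕ) (hm : 0 < m)
    (v : Fin m → Pairs L → ℝ)
    (hv : ∀ i : Fin m, ∀ a b c : Fin L,
      ∀ hab : a ≠ b, ∀ hac : a ≠ c, ∀ hbc : b ≠ c,
      minTwice (v i (pr a b hab)) (v i (pr a c hac)) (v i (pr b c hbc)))
    (w : Fin m → ℝ) (hw : ∀ i, 0 < w i) (hw1 : ∑ i, w i = 1)
    (x : Pairs L → ℝ)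
    (hmin : ∀ y : Pairs L → ℝ,
      ∑ i, w i * dTropG x (v i) ≤ ∑ i, w i * dTropG y (v i)) :
    ∀ a b c : Fin L, ∀ hab : a ≠ b, ∀ hac : a ≠ c, ∀ hbc : b ≠ c,
      minTwice (x (pr a b hab)) (x (pr a c hac)) (x (pr b c hbc)) := by
  intro a b c hab hac hbc
  by_contra hcon
  rcases not_minTwice_cases hcon with ⟨h1, h2⟩ | ⟨h1, h2⟩ | ⟨h1, h2⟩
  · obtain ⟨i, hv1, hv2⟩ := key hm v w hw hw1 x hmin _ _ _ h1 h2
    have := hv i a b c hab hac hbc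
    unfold minTwice at this
    rcases this with ⟨h, h'⟩ | ⟨h, h'⟩ | ⟨h, h'⟩ <;> linarith
  · obtain ⟨i, hv1, hv2⟩ := key hm v w hw hw1 x hmin _ _ _ h1 h2
    have := hv i a b c hab hac hbc
    unfold minTwice at this
    rcases this with ⟨h, h'⟩ | ⟨h, h'⟩ | ⟨h, h'⟩ <;> linarith
  · obtain ⟨i, hv1, hv2⟩ := key hm v w hw hw1 x hmin _ _ _ h1 h2
    have := hv i a b c hab hac hbc
    unfold minTwice at this
    rcases this with ⟨h, h'⟩ | ⟨h, h'⟩ | ⟨h, h'⟩ <;> linarith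
end

section
/- (Pareto on rooted triples.) Let L ≥ 3, let P be the set of 2-element subsets of {1,…,L}, let v_1, …, v_m ∈ ℝ^P, let w ∈ ℝ^m be a weight vector, and fix distinct leaves a, b, c ∈ {1,…,L}. Suppose every data point contains the rooted triple ab|c, i.e., for every i, v_i({a,b}) > v_i({a,c}) and v_i({a,c}) = v_i({b,c}). Then every minimizer x ∈ ℝ^P of F(x) = Σ_{i=1}^m w_i·d_Δ(x, v_i) over ℝ^P also contains the rooted triple ab|c: x({a,b}) > x({a,c}) and x({a,c}) = x({b,c}). -/
lemma sSup_range_eq_sup' {α : Type*} [Fintype α] (f : α → ℝ)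
    (hne : (Finset.univ : Finset α).Nonempty) :
    sSup (Set.range f) = Finset.univ.sup' hne f := by
  rw [Finset.sup'_eq_csSup_image, ← Set.image_univ, Finset.coe_univ]

lemma sup'_update_eq {α : Type*} [Fintype α] [DecidableEq α]
    (hne : (Finset.univ : Finset α).Nonempty)
    (f : α → ℝ) (q p0 : α) (hpq : p0 ≠ q) (t : ℝ)
    (h1 : t ≤ f p0) (h2 : f q ≤ f p0) :
    Finset.univ.sup' hne (Function.update f q t) = Finset.univ.sup' hne f := by
  apply le_antisymm
  · apply Finset.sup'_le
    intro p _
    rcases eq_or_ne p q with rfl | hp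
    · simpa only [Function.update_self] using h1.trans (Finset.le_sup' f (Finset.mem_univ p0))
    · rw [Function.update_of_ne hp]
      exact Finset.le_sup' f (Finset.mem_univ p)
  · apply Finset.sup'_le
    intro p _
    rcases eq_or_ne p q with rfl | hp
    · calc f p ≤ f p0 := h2
        _ = Function.update f p t p0 := by rw [Function.update_of_ne hpq]
        _ ≤ _ := Finset.le_sup' _ (Finset.mem_univ p0)
    · calc f p = Function.update f q t p := by rw [Function.update_of_ne hp]
        _ ≤ _ := Finset.le_sup' _ (Finset.mem_univ p)

lemma dTropG_update {α : Type*} [Fintype α] [DecidableEq α] [Nonempty α]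
    (x v : α → ℝ) (q p0 : α) (hpq : p0 ≠ q) (t : ℝ)
    (h1 : t - v q ≤ x p0 - v p0) (h2 : x q - v q ≤ x p0 - v p0) :
    dTropG (Function.update x q t) v = dTropG x v + (x q - t) := by
  have hne : (Finset.univ : Finset α).Nonempty := Finset.univ_nonempty
  have hfun : (fun p => Function.update x q t p - v p)
      = Function.update (fun p => x p - v p) q (t - v q) := by
    funext p
    rcases eq_or_ne p q with rfl | hp
    · simp
    · simp [Function.update_of_ne hp]
  have hsup : sSup (Set.range fun p => Function.update x q t p - v p)
      = sSup (Set.range fun p => x p - v p) := by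
    rw [sSup_range_eq_sup' _ hne, sSup_range_eq_sup' _ hne, hfun,
      sup'_update_eq hne _ q p0 hpq _ h1 h2]
  have hsum : ∑ p, (v p - Function.update x q t p)
      = ∑ p, (v p - x p) + (x q - t) := by
    have : ∀ p, v p - Function.update x q t p
        = (v p - x p) + (if p = q then x q - t else 0) := by
      intro p
      rcases eq_or_ne p q with rfl | hp
      · simp
      · simp [Function.update_of_ne hp, hp]
    simp only [this, Finset.sum_add_distrib, Finset.sum_ite_eq' Finset.univ q]
    simp
  simp only [dTropG, hsup, hsum]
  ring

theorem fermatWeber_pareto_on_rooted_triples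
    (L : ℕ) (hL : 3 ≤ L) (m : ℕ) (hm : 0 < m)
    (v : Fin m → Pairs L → ℝ)
    (w : Fin m → ℝ) (hw : ∀ i, 0 < w i) (hw1 : ∑ i, w i = 1)
    (a b c : Fin L) (hab : a ≠ b) (hac : a ≠ c) (hbc : b ≠ c)
    (hdata : ∀ i : Fin m,
      v i (pr a b hab) > v i (pr a c hac) ∧ v i (pr a c hac) = v i (pr b c hbc))
    (x : Pairs L → ℝ)
    (hmin : ∀ y : Pairs L → ℝ,
      ∑ i, w i * dTropG x (v i) ≤ ∑ i, w i * dTropG y (v i)) :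
    x (pr a b hab) > x (pr a c hac) ∧ x (pr a c hac) = x (pr b c hbc) := by
  have : Nonempty (Pairs L) := ⟨pr a b hab⟩
  -- distinctness of the three pairs
  have hbc_ac : pr b c hbc ≠ pr a c hac := by
    intro h
    have ha : a ∈ ({b, c} : Finset (Fin L)) := by
      have := congrArg Subtype.val h
      simp only [pr] at this
      rw [this]; simp
    simp at ha
    rcases ha with h' | h'
    · exact hab h'
    · exact hac h'
  have hac_ab : pr a c hac ≠ pr a b hab := by
    intro h
    have hc : c ∈ ({a, b} : Finset (Fin L)) := by
      have := congrArg Subtype.val h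
      simp only [pr] at this
      rw [← this]; simp
    simp at hc
    rcases hc with h' | h'
    · exact hac h'.symm
    · exact hbc h'.symm
  -- key exchange lemma
  have key : ∀ (q p0 : Pairs L), p0 ≠ q → ∀ t : ℝ, x q < t →
      (∀ i, t - v i q ≤ x p0 - v i p0) → False := by
    intro q p0 hpq t ht h
    have heq : ∀ i, dTropG (Function.update x q t) (v i)
        = dTropG x (v i) + (x q - t) := by
      intro i
      refine dTropG_update x (v i) q p0 hpq t (h i) ?_
      exact le_trans (by linarith [ht]) (h i)
    have hle := hmin (Function.update x q t)
    have : ∑ i, w i * dTropG (Function.update x q t) (v i)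
        = ∑ i, w i * dTropG x (v i) + (x q - t) := by
      calc ∑ i, w i * dTropG (Function.update x q t) (v i)
          = ∑ i, (w i * dTropG x (v i) + w i * (x q - t)) := by
            refine Finset.sum_congr rfl fun i _ => ?_
            rw [heq i]; ring
        _ = ∑ i, w i * dTropG x (v i) + (∑ i, w i) * (x q - t) := by
            rw [Finset.sum_add_distrib, ← Finset.sum_mul]
        _ = ∑ i, w i * dTropG x (v i) + (x q - t) := by rw [hw1, one_mul]
    rw [this] at hle
    linarith
  -- step 1 : x_ac = x_bc
  have h1 : x (pr a c hac) = x (pr b c hbc) := by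
    by_contra hne'
    rcases lt_or_gt_of_ne hne' with hlt | hgt
    · exact key (pr a c hac) (pr b c hbc) hbc_ac (x (pr b c hbc)) hlt
        (fun i => by rw [(hdata i).2])
    · exact key (pr b c hbc) (pr a c hac) hbc_ac.symm (x (pr a c hac)) hgt
        (fun i => by rw [(hdata i).2])
  -- step 2 : x_ab > x_ac
  have h2 : x (pr a c hac) < x (pr a b hab) := by
    by_contra hle'
    push_neg at hle'
    have hmne : (Finset.univ : Finset (Fin m)).Nonempty :=
      ⟨⟨0, hm⟩, Finset.mem_univ _⟩
    set ε := Finset.univ.inf' hmne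
      (fun i => v i (pr a b hab) - v i (pr a c hac)) with hε
    have hεpos : 0 < ε := by
      rw [hε, Finset.lt_inf'_iff]
      intro i _
      have := (hdata i).1
      linarith
    refine key (pr a b hab) (pr a c hac) hac_ab (x (pr a c hac) + ε)
      (by linarith) ?_
    intro i
    have hεle : ε ≤ v i (pr a b hab) - v i (pr a c hac) :=
      Finset.inf'_le _ (Finset.mem_univ i)
    linarith
  exact ⟨h2, h1⟩
end

section
/- (Co-Pareto on rooted triples.) Let L ≥ 3, let P be the set of 2-element subsets of {1,…,L}, let v_1, …, v_m ∈ ℝ^P each satisfy the negated three-point condition (for all distinct leaves a,b,c, the minimum of v_i({a,b}), v_i({a,c}), v_i({b,c}) is attained at least twice), let w ∈ ℝ^m be a weight vector, and fix distinct leaves a, b, c. If some minimizer x ∈ ℝ^P of F(x) = Σ_{i=1}^m w_i·d_Δ(x, v_i) over ℝ^P contains the rooted triple ab|c, i.e., x({a,b}) > x({a,c}) and x({a,c}) = x({b,c}), then there exists an index t with v_t({a,b}) > v_t({a,c}) and v_t({a,c}) = v_t({b,c}). -/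
theorem fermatWeber_coPareto_on_rooted_triples
    (L : ℕ) (hL : 3 ≤ L) (m : ℕ) (hm : 0 < m)
    (v : Fin m → Pairs L → ℝ)
    (hv : ∀ i : Fin m, ∀ a b c : Fin L,
      ∀ hab : a ≠ b, ∀ hac : a ≠ c, ∀ hbc : b ≠ c,
      minTwice (v i (pr a b hab)) (v i (pr a c hac)) (v i (pr b c hbc)))
    (w : Fin m → ℝ) (hw : ∀ i, 0 < w i) (hw1 : ∑ i, w i = 1)
    (a b c : Fin L) (hab : a ≠ b) (hac : a ≠ c) (hbc : b ≠ c)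
    (x : Pairs L → ℝ)
    (hmin : ∀ y : Pairs L → ℝ,
      ∑ i, w i * dTropG x (v i) ≤ ∑ i, w i * dTropG y (v i))
    (hx : x (pr a b hab) > x (pr a c hac) ∧ x (pr a c hac) = x (pr b c hbc)) :
    ∃ t : Fin m,
      v t (pr a b hab) > v t (pr a c hac) ∧ v t (pr a c hac) = v t (pr b c hbc) := by
  classical
  by_contra hcon
  push_neg at hcon
  obtain ⟨hx1, hx2⟩ := hx
  set e := pr a b hab with he
  set f := pr a c hac with hf
  set g := pr b c hbc with hg
  haveI : Nonempty (Fin m) := ⟨⟨0, hm⟩⟩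
  haveI hnePairs : Nonempty (Pairs L) := ⟨e⟩
  -- every input has v i e ≤ v i f and v i e ≤ v i g
  have hle : ∀ i, v i e ≤ v i f ∧ v i e ≤ v i g := by
    intro i
    rcases hv i a b c hab hac hbc with ⟨h1, h2⟩ | ⟨h1, h2⟩ | ⟨h1, h2⟩
    · exact ⟨le_of_eq h1, h1 ▸ h2⟩
    · exact ⟨h1 ▸ h2, le_of_eq h1⟩
    · have hnlt : ¬ v i e > v i f := fun hlt => (hcon i hlt) h1
      have hEf : v i e ≤ v i f := not_lt.mp hnlt
      exact ⟨hEf, h1 ▸ hEf⟩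
  have hfg : f ≠ g := by
    intro hEq
    have hval : ({a, c} : Finset (Fin L)) = {b, c} := congrArg Subtype.val hEq
    have ha : a ∈ ({b, c} : Finset (Fin L)) := by
      rw [← hval]; simp
    simp only [Finset.mem_insert, Finset.mem_singleton] at ha
    rcases ha with h | h
    · exact hab h
    · exact hac h
  set M : Fin m → ℝ := fun i => sSup (Set.range fun p => x p - v i p) with hM
  have hMge : ∀ i p, x p - v i p ≤ M i := fun i p =>
    le_csSup (Set.finite_range _).bddAbove ⟨p, rfl⟩
  have hMf : ∀ i, x f - v i f < M i := by
    intro i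
    have h1 := (hle i).1
    have h2 := hMge i e
    linarith
  have hMg : ∀ i, x g - v i g < M i := by
    intro i
    have h1 := (hle i).2
    have h2 := hMge i e
    linarith
  set t : ℝ := Finset.univ.inf' Finset.univ_nonempty
    (fun i => min (M i - (x f - v i f)) (M i - (x g - v i g))) with htdef
  have ht0 : 0 < t := by
    rw [htdef, Finset.lt_inf'_iff]
    intro i _
    exact lt_min (by linarith [hMf i]) (by linarith [hMg i])
  have htf : ∀ i, t ≤ M i - (x f - v i f) := fun i =>
    le_trans (Finset.inf'_le _ (Finset.mem_univ i)) (min_le_left _ _)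
  have htg : ∀ i, t ≤ M i - (x g - v i g) := fun i =>
    le_trans (Finset.inf'_le _ (Finset.mem_univ i)) (min_le_right _ _)
  set y : Pairs L → ℝ := fun p => if p = f ∨ p = g then x p + t else x p with hy
  have hyge : ∀ p, x p ≤ y p := by
    intro p
    rw [hy]
    dsimp only
    split
    · linarith
    · exact le_rfl
  -- the max term is unchanged
  have hsup : ∀ i, sSup (Set.range fun p => y p - v i p) = M i := by
    intro i
    apply le_antisymm
    · apply csSup_le (Set.range_nonempty _)
      rintro _ ⟨p, rfl⟩
      rw [hy]
      dsimp only
      rcases eq_or_ne p f with hpf | hpf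
      · subst hpf
        rw [if_pos (Or.inl rfl)]
        linarith [htf i]
      · rcases eq_or_ne p g with hpg | hpg
        · subst hpg
          rw [if_pos (Or.inr rfl)]
          linarith [htg i]
        · rw [if_neg (by tauto)]
          exact hMge i p
    · have hmem : M i ∈ Set.range fun p => x p - v i p :=
        Set.Nonempty.csSup_mem (Set.range_nonempty _) (Set.finite_range _)
      obtain ⟨p0, hp0⟩ := hmem
      calc M i = x p0 - v i p0 := hp0.symm
        _ ≤ y p0 - v i p0 := by linarith [hyge p0]
        _ ≤ sSup (Set.range fun p => y p - v i p) :=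
            le_csSup (Set.finite_range _).bddAbove ⟨p0, rfl⟩
  -- the sum term decreases by 2t
  have hsumy : ∀ i, (∑ p, (v i p - y p)) = (∑ p, (v i p - x p)) - 2 * t := by
    intro i
    have hptw : ∀ p : Pairs L, v i p - y p =
        (v i p - x p) - ((if p = f then t else 0) + (if p = g then t else 0)) := by
      intro p
      rw [hy]
      dsimp only
      rcases eq_or_ne p f with hpf | hpf
      · subst hpf
        rw [if_pos (Or.inl rfl), if_pos rfl, if_neg hfg]
        ring
      · rcases eq_or_ne p g with hpg | hpg
        · subst hpg
          rw [if_pos (Or.inr rfl), if_neg hpf, if_pos rfl]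
          ring
        · rw [if_neg (by tauto), if_neg hpf, if_neg hpg]
          ring
    rw [Finset.sum_congr rfl (fun p _ => hptw p), Finset.sum_sub_distrib,
      Finset.sum_add_distrib, Finset.sum_ite_eq' Finset.univ f (fun _ => t),
      Finset.sum_ite_eq' Finset.univ g (fun _ => t),
      if_pos (Finset.mem_univ f), if_pos (Finset.mem_univ g)]
    ring
  have hd : ∀ i, dTropG y (v i) = dTropG x (v i) - 2 * t := by
    intro i
    rw [dTropG, dTropG, hsup i, hsumy i]
    ring
  have hF : ∑ i, w i * dTropG y (v i) = (∑ i, w i * dTropG x (v i)) - 2 * t := by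
    have h1 : ∀ i : Fin m, w i * dTropG y (v i)
        = w i * dTropG x (v i) - 2 * t * w i := by
      intro i; rw [hd i]; ring
    rw [Finset.sum_congr rfl (fun i _ => h1 i), Finset.sum_sub_distrib,
      ← Finset.mul_sum, hw1]
    ring
  have := hmin y
  rw [hF] at this
  linarith
end
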